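/- Let f(u,v) = (u, u²f₂₁(u) + v², u²f₃₁(u) + v²f₃₂(u,v)) with f₂₁, f₃₁, f₃₂ smooth and f₃₂(u,v) = c₀(u) + v·c₁(u) + v²·c₂(u,v²) + v³·c₃(u,v²) with c₀(0) = c₁(0) = c₁'(0) = 0 and c₃(0,0) ≠ 0, where the self-intersection set satisfies the equation c₁(u) + v²c₃(u,v²) = 0 with c₁''(0)·c₃(0,0) < 0. Along a branch v(u) of the self-intersection curve (with v(0)=0, v'(0)² = -c₁''(0)/(2c₃(0,0))), the normal curvature of the curve u ↦ f(u, v(u)) at u = 0 equals 2·f₃₁(0). -/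

import Mathlib

open scoped RealInnerProductSpace Topology
noncomputable section

abbrev E3 := EuclideanSpace ℝ (Fin 3)

def vec3 (x y z : ℝ) : E3 := WithLp.toLp 2 ![x, y, z]

open scoped ContDiff

lemma vec3_comb (x y z : ℝ) :
    x • vec3 1 0 0 + y • vec3 0 1 0 + z • vec3 0 0 1 = vec3 x y z := by
  ext i; fin_cases i <;> simp [vec3]

lemma inner_vec3 (a b g x y z : ℝ) : ⟪vec3 a b g, vec3 x y z⟫ = a*x + b*y + g*z := by
  simp [vec3, PiLp.inner_apply, Fin.sum_univ_three, RCLike.inner_apply]; ring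

lemma norm_vec3_100 : ‖vec3 1 0 0‖ = 1 := by
  rw [EuclideanSpace.norm_eq]
  simp [vec3, Fin.sum_univ_three]

/-- derivative of the second component -/
def Bp (f21 v : ℝ → ℝ) : ℝ → ℝ :=
  fun u => 2*u*f21 u + u^2*deriv f21 u + 2*(v u)*deriv v u

/-- derivative of the third component -/
def Gp (f31 v : ℝ → ℝ) (f32 : ℝ × ℝ → ℝ) : ℝ → ℝ :=
  fun u => 2*u*f31 u + u^2*deriv f31 u +
    (2*(v u)*deriv v u*f32 (u, v u) + (v u)^2*deriv (fun t => f32 (t, v t)) u)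

/-- Normal curvature of the self-intersection curve of a cuspidal `S₁⁻` singularity in
normal form: along a branch `v(u)` the normal curvature of `u ↦ f(u, v(u))` at `u = 0`
equals `2 f₃₁(0)`. -/
theorem stmt15 (f21 f31 : ℝ → ℝ) (f32 : ℝ × ℝ → ℝ)
    (c0 c1 : ℝ → ℝ) (c2 c3 : ℝ × ℝ → ℝ)
    (h21 : ContDiff ℝ (⊤ : ℕ∞) f21) (h31 : ContDiff ℝ (⊤ : ℕ∞) f31) (h32 : ContDiff ℝ (⊤ : ℕ∞) f32)
    (hc0 : ContDiff ℝ (⊤ : ℕ∞) c0) (hc1 : ContDiff ℝ (⊤ : ℕ∞) c1)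
    (hc2 : ContDiff ℝ (⊤ : ℕ∞) c2) (hc3 : ContDiff ℝ (⊤ : ℕ∞) c3)
    (hdecomp : ∀ u w : ℝ, f32 (u, w) =
      c0 u + w * c1 u + w ^ 2 * c2 (u, w ^ 2) + w ^ 3 * c3 (u, w ^ 2))
    (hc00 : c0 0 = 0) (hc10 : c1 0 = 0) (hc1' : deriv c1 0 = 0)
    (hc3ne : c3 (0, 0) ≠ 0)
    (hsign : iteratedDeriv 2 c1 0 * c3 (0, 0) < 0)
    (F : ℝ × ℝ → E3)
    (hF : ∀ p : ℝ × ℝ, F p =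
      vec3 p.1 (p.1 ^ 2 * f21 p.1 + p.2 ^ 2)
        (p.1 ^ 2 * f31 p.1 + p.2 ^ 2 * f32 (p.1, p.2)))
    (v : ℝ → ℝ) (hv : ContDiff ℝ (⊤ : ℕ∞) v) (hv0 : v 0 = 0)
    (hv' : (deriv v 0) ^ 2 = -(iteratedDeriv 2 c1 0) / (2 * c3 (0, 0)))
    (hbranch : ∀ᶠ u in 𝓝 (0 : ℝ), c1 u + (v u) ^ 2 * c3 (u, (v u) ^ 2) = 0)
    (ν : ℝ → ℝ → E3)
    (hν : ContDiff ℝ (⊤ : ℕ∞) (fun p : ℝ × ℝ => ν p.1 p.2))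
    (hunit : ∀ u w : ℝ, ‖ν u w‖ = 1)
    (horthu : ∀ u w : ℝ, ⟪deriv (fun x => F (x, w)) u, ν u w⟫ = 0)
    (horthv : ∀ u w : ℝ, ⟪deriv (fun y => F (u, y)) w, ν u w⟫ = 0)
    (hν0 : ν 0 0 = vec3 0 0 1)
    (c : ℝ → E3) (hc : ∀ u : ℝ, c u = F (u, v u)) :
    ⟪iteratedDeriv 2 c 0, ν 0 0⟫ / ‖deriv c 0‖ ^ 2 = 2 * f31 0 := by
  have hf320 : f32 (0, 0) = 0 := by
    have := hdecomp 0 0; simp [hc00] at this; simpa using this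
  set e0 := vec3 1 0 0
  set e1 := vec3 0 1 0
  set e2 := vec3 0 0 1
  have h21 : ContDiff ℝ ∞ f21 := h21.of_le (by simp)
  have h31 : ContDiff ℝ ∞ f31 := h31.of_le (by simp)
  have h32 : ContDiff ℝ ∞ f32 := h32.of_le (by simp)
  have hv : ContDiff ℝ ∞ v := hv.of_le (by simp)
  have hle : (∞:WithTop ℕ∞) ≠ 0 := by simp
  have hvD : Differentiable ℝ v := hv.differentiable hle
  have hφ : ContDiff ℝ ∞ (fun t => f32 (t, v t)) := h32.comp (contDiff_id.prodMk hv)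
  have hφD : Differentiable ℝ (fun t => f32 (t, v t)) := hφ.differentiable hle
  have h21' : ContDiff ℝ ∞ (deriv f21) := (contDiff_infty_iff_deriv.mp h21).2
  have h31' : ContDiff ℝ ∞ (deriv f31) := (contDiff_infty_iff_deriv.mp h31).2
  have hvd' : ContDiff ℝ ∞ (deriv v) := (contDiff_infty_iff_deriv.mp hv).2
  have hφ' : ContDiff ℝ ∞ (deriv (fun t => f32 (t, v t))) := (contDiff_infty_iff_deriv.mp hφ).2
  -- derivative of B
  have hBd : ∀ u, HasDerivAt (fun u => u^2 * f21 u + (v u)^2) (Bp f21 v u) u := by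
    intro u
    have h1 := (hasDerivAt_pow 2 u).mul ((h21.differentiable hle) u).hasDerivAt
    have h2 := ((hvD u).hasDerivAt).pow 2
    have := h1.add h2
    refine this.congr_deriv ?_
    simp only [Bp]; push_cast; ring
  -- derivative of G
  have hGd : ∀ u, HasDerivAt (fun u => u^2 * f31 u + (v u)^2 * f32 (u, v u))
      (Gp f31 v f32 u) u := by
    intro u
    have h1 := (hasDerivAt_pow 2 u).mul ((h31.differentiable hle) u).hasDerivAt
    have h2 := (((hvD u).hasDerivAt).pow 2).mul ((hφD u).hasDerivAt)
    have := h1.add h2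
    refine this.congr_deriv ?_
    simp only [Gp, Pi.pow_apply]; push_cast; ring
  -- Bp smooth
  have hBps : ContDiff ℝ ∞ (Bp f21 v) := by
    unfold Bp; fun_prop
  have hBpd : HasDerivAt (Bp f21 v) (deriv (Bp f21 v) 0) 0 :=
    ((hBps.differentiable hle) 0).hasDerivAt
  -- Gp has derivative 2 * f31 0 at 0
  have hGpd : HasDerivAt (Gp f31 v f32) (2 * f31 0) 0 := by
    have a1 : HasDerivAt (fun u => 2*u*f31 u) (2*1*f31 0 + 2*0*deriv f31 0) 0 :=
      ((hasDerivAt_id' (x := (0:ℝ))).const_mul 2).mul ((h31.differentiable hle) 0).hasDerivAt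
    have a2 := (hasDerivAt_pow 2 (0:ℝ)).mul ((h31'.differentiable hle) 0).hasDerivAt
    have a3 := ((((hvD 0).hasDerivAt).const_mul 2).mul
        ((hvd'.differentiable hle 0).hasDerivAt)).mul ((hφD 0).hasDerivAt)
    have a4 := (((hvD 0).hasDerivAt).pow 2).mul ((hφ'.differentiable hle 0).hasDerivAt)
    have := (a1.add a2).add (a3.add a4)
    refine this.congr_deriv ?_
    simp [hv0, hf320, show f32 0 = 0 from hf320]
  have hBp0 : Bp f21 v 0 = 0 := by simp [Bp, hv0]
  have hGp0 : Gp f31 v f32 0 = 0 := by simp [Gp, hv0]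
  -- decomposition of c
  have hceq : c = fun u => u • e0 + (u^2 * f21 u + (v u)^2) • e1 +
      (u^2 * f31 u + (v u)^2 * f32 (u, v u)) • e2 := by
    funext u
    rw [hc u, hF]
    exact (vec3_comb _ _ _).symm
  -- first derivative of c
  have hcd : ∀ u, HasDerivAt c
      ((1:ℝ) • e0 + (Bp f21 v u) • e1 + (Gp f31 v f32 u) • e2) u := by
    intro u
    rw [hceq]
    exact (((hasDerivAt_id' (x := u)).smul_const e0).add ((hBd u).smul_const e1)).add
      ((hGd u).smul_const e2)
  have hderivc : deriv c = fun u =>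
      (1:ℝ) • e0 + (Bp f21 v u) • e1 + (Gp f31 v f32 u) • e2 :=
    funext fun u => (hcd u).deriv
  -- deriv c 0 = (1,0,0)
  have hdc0 : deriv c 0 = vec3 1 0 0 := by
    rw [hderivc]
    simp only [hBp0, hGp0]
    rw [vec3_comb]
  -- second derivative of c at 0
  have hdc2 : HasDerivAt (deriv c)
      ((0:ℝ) • e0 + (deriv (Bp f21 v) 0) • e1 + (2 * f31 0) • e2) 0 := by
    rw [hderivc]
    have h0 : HasDerivAt (fun _ : ℝ => (1:ℝ) • e0) ((0:ℝ) • e0) 0 := by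
      simpa using hasDerivAt_const (0:ℝ) ((1:ℝ) • e0)
    exact (h0.add (hBpd.smul_const e1)).add (hGpd.smul_const e2)
  have h2c : iteratedDeriv 2 c 0 =
      (0:ℝ) • e0 + (deriv (Bp f21 v) 0) • e1 + (2 * f31 0) • e2 := by
    rw [show (2:ℕ) = 1 + 1 from rfl, iteratedDeriv_succ, iteratedDeriv_one]
    exact hdc2.deriv
  rw [h2c, hν0, hdc0, vec3_comb, norm_vec3_100, inner_vec3]
  ring
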